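/- Let H be a connected multigraph with at least one edge and let G be a multigraph. Define G* from G by adding, for every vertex v of G and every i ∈ {1, …, mdeg_G(v)}, new vertices v′ᵢ, v″ᵢ with a double edge {v′ᵢ, v″ᵢ} and single edges {v, v′ᵢ}, {v, v″ᵢ}; define H⁺ from H by adding, for every vertex u of H, new vertices u′, u″ with a double edge {u′, u″} and single edges {u, u′}, {u, u″}. Then the maximum size of an H⁺-immersion packing in G* is at most the maximum size of an H-immersion packing in G. -/

import Mathlib

open scoped Classical

/-- A finite loopless multigraph: `E` indexes edges, `ends e` gives the endpoints. -/
structure Multigraph (V : Type) (E : Type) where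
  ends : E → Sym2 V
  loopless : ∀ e, ¬ (ends e).IsDiag

namespace Multigraph

variable {V E V1 E1 V2 E2 : Type}

/-- Multidegree: number of edges (with multiplicity) incident with `v`. -/
noncomputable def mdeg (G : Multigraph V E) [Fintype E] (v : V) : ℕ :=
  (Finset.univ.filter (fun e => v ∈ G.ends e)).card

/-- Walks in a multigraph, remembering which edge instance is used at each step. -/
inductive Walk (G : Multigraph V E) : V → V → Type where
  | nil (v : V) : Walk G v v
  | cons {u v w : V} (e : E) (he : G.ends e = s(u, v)) (p : Walk G v w) : Walk G u w

namespace Walk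

variable {G : Multigraph V E}

def support : {u v : V} → G.Walk u v → List V
  | u, _, .nil _ => [u]
  | u, _, .cons _ _ p => u :: p.support

def edges : {u v : V} → G.Walk u v → List E
  | _, _, .nil _ => []
  | _, _, .cons e _ p => e :: p.edges

/-- A walk is a path when its vertices are pairwise distinct. -/
def IsPath {u v : V} (p : G.Walk u v) : Prop := p.support.Nodup

/-- The internal vertices of a walk (all vertices except the two endpoints). -/
def interior {u v : V} (p : G.Walk u v) : List V := p.support.tail.dropLast

end Walk

/-- An `H`-immersion model in `G`. -/
structure ImmersionModel (H : Multigraph V1 E1) (G : Multigraph V E) where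
  vmap : V1 → V
  vmap_inj : Function.Injective vmap
  src : E1 → V1
  tgt : E1 → V1
  ends_eq : ∀ e, H.ends e = s(src e, tgt e)
  path : ∀ e, G.Walk (vmap (src e)) (vmap (tgt e))
  path_isPath : ∀ e, (path e).IsPath
  edge_disjoint : ∀ e₁ e₂, e₁ ≠ e₂ → ∀ x, x ∈ (path e₁).edges → x ∉ (path e₂).edges

namespace ImmersionModel

variable {H : Multigraph V1 E1} {G : Multigraph V E}

/-- The edges of the immersion expansion associated with the model. -/
def edgeSet (m : ImmersionModel H G) : Set E := {x | ∃ e, x ∈ (m.path e).edges}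

/-- The vertices of the immersion expansion associated with the model. -/
def vertSet (m : ImmersionModel H G) : Set V :=
  {x | (∃ a, m.vmap a = x) ∨ ∃ e, x ∈ (m.path e).support}

end ImmersionModel

/-- `G` contains `H` as an immersion. -/
def Immersed (H : Multigraph V1 E1) (G : Multigraph V E) : Prop :=
  Nonempty (ImmersionModel H G)

/-- Deleting a set of edges from a multigraph. -/
def deleteEdges (G : Multigraph V E) (F : Set E) : Multigraph V {e : E // e ∉ F} where
  ends e := G.ends e.1
  loopless e := G.loopless e.1

/-- The minimum size of an `H`-cover of `G`: a set of edges meeting every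
`H`-immersion expansion. (By convention `sInf ∅ = 0`.) -/
noncomputable def coverNum (H : Multigraph V1 E1) (G : Multigraph V E) : ℕ :=
  sInf {n | ∃ C : Finset E, ¬ Immersed H (G.deleteEdges ↑C) ∧ C.card = n}

/-- The maximum size of an `H`-packing in `G`: a collection of pairwise
edge-disjoint `H`-immersion expansions. -/
noncomputable def packNum (H : Multigraph V1 E1) (G : Multigraph V E) : ℕ :=
  sSup {n | ∃ f : Fin n → ImmersionModel H G,
    ∀ i j, i ≠ j → Disjoint (f i).edgeSet (f j).edgeSet}

/-- Connectivity of a multigraph. -/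
def Connected (G : Multigraph V E) : Prop :=
  Nonempty V ∧ ∀ u v : V, Nonempty (G.Walk u v)

/-- Reachability in `G` avoiding the vertex set `X`. -/
def ReachAvoid (G : Multigraph V E) (X : Set V) (u v : V) : Prop :=
  ∃ p : G.Walk u v, ∀ x ∈ p.support, x ∉ X

/-- The underlying simple graph of a multigraph. -/
def toSimple (G : Multigraph V E) : SimpleGraph V where
  Adj u v := u ≠ v ∧ ∃ e, G.ends e = s(u, v)
  symm := by
    constructor
    rintro u v ⟨h, e, he⟩
    exact ⟨h.symm, e, by rw [he, Sym2.eq_swap]⟩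
  loopless := ⟨fun v h => h.1 rfl⟩

end Multigraph

section Minor

/-- `A` is a minor of `B` (branch-set/minor-model definition). -/
def SimpleGraphMinorOf {α β : Type} (A : SimpleGraph α) (B : SimpleGraph β) : Prop :=
  ∃ C : α → Set β,
    (∀ a, (C a).Nonempty) ∧
    (∀ a, (B.induce (C a)).Connected) ∧
    (Pairwise fun a a' => Disjoint (C a) (C a')) ∧
    (∀ a a', A.Adj a a' → ∃ x ∈ C a, ∃ y ∈ C a', B.Adj x y)

end Minor

namespace Multigraph

variable {V E : Type}

/-- Planarity of a loopless multigraph, via Wagner's theorem: no `K₅` and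
no `K₃,₃` minor in the underlying simple graph. -/
def Planar (G : Multigraph V E) : Prop :=
  ¬ SimpleGraphMinorOf (SimpleGraph.completeGraph (Fin 5)) G.toSimple ∧
  ¬ SimpleGraphMinorOf (completeBipartiteGraph (Fin 3) (Fin 3)) G.toSimple

lemma isDiag_map_inl {α β : Type} (p : Sym2 α) :
    (p.map (Sum.inl : α → α ⊕ β)).IsDiag ↔ p.IsDiag := by
  induction p using Sym2.ind with
  | _ a b => simp

/-- `G⁺`: attach to every vertex `v` a gadget of two new vertices `(v,false)`,
`(v,true)` joined by a double edge, each joined to `v` by a single edge. -/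
def plus (G : Multigraph V E) :
    Multigraph (V ⊕ (V × Bool)) (E ⊕ ((V × Fin 2) ⊕ (V × Bool))) where
  ends
    | .inl e => (G.ends e).map .inl
    | .inr (.inl (v, _)) => s(.inr (v, false), .inr (v, true))
    | .inr (.inr (v, b)) => s(.inl v, .inr (v, b))
  loopless := by
    rintro (e | ⟨v, i⟩ | ⟨v, b⟩) h
    · exact G.loopless e ((isDiag_map_inl _).1 h)
    · simp at h
    · simp at h

/-- `G*`: attach, at every vertex `v` and for every `i ∈ {1,…,mdeg v}`, a gadget of two
new vertices joined by a double edge, each joined to `v` by a single edge. -/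
noncomputable def star (G : Multigraph V E) [Fintype E] :
    Multigraph (V ⊕ ((Σ v : V, Fin (G.mdeg v)) × Bool))
      (E ⊕ (((Σ v : V, Fin (G.mdeg v)) × Fin 2) ⊕ ((Σ v : V, Fin (G.mdeg v)) × Bool))) where
  ends
    | .inl e => (G.ends e).map .inl
    | .inr (.inl (p, _)) => s(.inr (p, false), .inr (p, true))
    | .inr (.inr (p, b)) => s(.inl p.1, .inr (p, b))
  loopless := by
    rintro (e | ⟨p, i⟩ | ⟨p, b⟩) h
    · exact G.loopless e ((isDiag_map_inl _).1 h)
    · simp at h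
    · simp at h

/-- The subdivision of `G` in which the edge `e` (oriented from `src e` to `tgt e`)
is subdivided `n e` times, i.e. replaced by a path with `n e` internal vertices. -/
def subdivide (G : Multigraph V E) (src tgt : E → V)
    (hst : ∀ e, G.ends e = s(src e, tgt e)) (n : E → ℕ) :
    Multigraph (V ⊕ (Σ e : E, Fin (n e))) (Σ e : E, Fin (n e + 1)) where
  ends := fun q =>
    s(if _ : q.2.val = 0 then Sum.inl (src q.1)
        else Sum.inr ⟨q.1, ⟨q.2.val - 1, by have := q.2.isLt; omega⟩⟩,
      if _ : q.2.val = n q.1 then Sum.inl (tgt q.1)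
        else Sum.inr ⟨q.1, ⟨q.2.val, by have := q.2.isLt; omega⟩⟩)
  loopless := by
    rintro ⟨e, i⟩ h
    rw [Sym2.mk_isDiag_iff] at h
    split_ifs at h with h1 h2 h2 <;>
      first
        | exact Sum.noConfusion h
        | (have hl := G.loopless e
           rw [hst e, Sym2.mk_isDiag_iff] at hl
           exact hl (Sum.inl.inj h))
        | (have h3 := Sum.inr.inj h
           simp at h1 h3 <;> simp only [Fin.ext_iff, Fin.val_zero] at h1 <;> omega)

end Multigraph

namespace Multigraph

/-- The multigraph underlying a simple graph. -/
def ofSimple {α : Type} (S : SimpleGraph α) : Multigraph α S.edgeSet where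
  ends e := e.1
  loopless e := S.not_isDiag_of_mem_edgeSet e.2

/-- A strong immersion model: additionally, no branch vertex is an internal
vertex of a certifying path. -/
structure StrongImmersionModel {V1 E1 V E : Type} (H : Multigraph V1 E1) (G : Multigraph V E)
    extends ImmersionModel H G where
  not_internal : ∀ (e : E1) (x : V1), vmap x ∉ (path e).interior

/-- An `H`-topological-minor model in `G`: certifying paths are internally
vertex-disjoint and their internal vertices avoid the branch vertices. -/
structure TopMinorModel {V1 E1 V E : Type} (H : Multigraph V1 E1) (G : Multigraph V E) where
  vmap : V1 → V
  vmap_inj : Function.Injective vmap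
  src : E1 → V1
  tgt : E1 → V1
  ends_eq : ∀ e, H.ends e = s(src e, tgt e)
  path : ∀ e, G.Walk (vmap (src e)) (vmap (tgt e))
  path_isPath : ∀ e, (path e).IsPath
  internal_disjoint : ∀ e₁ e₂, e₁ ≠ e₂ → ∀ x, x ∈ (path e₁).interior → x ∉ (path e₂).support
  internal_avoid : ∀ (e : E1) (x : V1), vmap x ∉ (path e).interior

end Multigraph

section Walls

/-- The `m × n` grid graph. -/
def gridGraph (m n : ℕ) : SimpleGraph (Fin m × Fin n) where
  Adj p q := (p.1 = q.1 ∧ (p.2.val + 1 = q.2.val ∨ q.2.val + 1 = p.2.val)) ∨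
             (p.2 = q.2 ∧ (p.1.val + 1 = q.1.val ∨ q.1.val + 1 = p.1.val))
  symm := by constructor; rintro p q (⟨h, h'⟩ | ⟨h, h'⟩) <;> [left; right] <;> exact ⟨h.symm, h'.symm⟩
  loopless := by constructor; rintro p (⟨-, h | h⟩ | ⟨-, h | h⟩) <;> omega

/-- The `k×k` grid `Γ_k` as a multigraph. -/
def Gamma (k : ℕ) : Multigraph (Fin k × Fin k) (gridGraph k k).edgeSet :=
  Multigraph.ofSimple (gridGraph k k)

/-- The `(k+1) × (2k+2)` grid with the vertical edges `{(x,y),(x+1,y)}` with `x+y` odd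
(in 1-indexed coordinates) removed. -/
def wallPre (k : ℕ) : SimpleGraph (Fin (k + 1) × Fin (2 * k + 2)) where
  Adj p q := (gridGraph (k + 1) (2 * k + 2)).Adj p q ∧
    ¬ (p.2 = q.2 ∧ (min p.1.val q.1.val + p.2.val) % 2 = 1)
  symm := by
    constructor
    rintro p q ⟨h, h'⟩
    refine ⟨h.symm, fun ⟨hc, hp⟩ => h' ⟨hc.symm, ?_⟩⟩
    rw [Nat.min_comm] at hp
    rw [← hc]
    exact hp
  loopless := ⟨fun p h => (gridGraph _ _).loopless.irrefl p h.1⟩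

/-- Degree of a vertex in `wallPre k`. -/
noncomputable def wallPreDeg (k : ℕ) (v : Fin (k + 1) × Fin (2 * k + 2)) : ℕ :=
  (Finset.univ.filter (fun w => (wallPre k).Adj v w)).card

/-- The vertex set of the `k`-wall: vertices of degree `≠ 1`. -/
def wallVerts (k : ℕ) : Set (Fin (k + 1) × Fin (2 * k + 2)) :=
  {v | wallPreDeg k v ≠ 1}

/-- The `k`-wall `W_k`, as a simple graph. -/
noncomputable def wallSimple (k : ℕ) : SimpleGraph (wallVerts k) :=
  (wallPre k).induce (wallVerts k)

/-- The `k`-wall `W_k`, as a multigraph. -/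
noncomputable def Wall (k : ℕ) : Multigraph (wallVerts k) (wallSimple k).edgeSet :=
  Multigraph.ofSimple (wallSimple k)

/-- The doubled edges of `W⁺_k`: the horizontal edges lying on both a vertical and a
horizontal path of the wall, i.e. those whose lower column index is odd (1-indexed). -/
def isDoubledEdge (k : ℕ) (p : Sym2 (wallVerts k)) : Prop :=
  ∃ a b : wallVerts k, p = s(a, b) ∧ (a : Fin (k + 1) × Fin (2 * k + 2)).1 = (b : Fin (k + 1) × Fin (2 * k + 2)).1 ∧
    (b : Fin (k + 1) × Fin (2 * k + 2)).2.val = (a : Fin (k + 1) × Fin (2 * k + 2)).2.val + 1 ∧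
    (a : Fin (k + 1) × Fin (2 * k + 2)).2.val % 2 = 0

/-- `W⁺_k`: the `k`-wall with a second parallel copy of every doubled edge. -/
noncomputable def WallPlus (k : ℕ) :
    Multigraph (wallVerts k)
      ((wallSimple k).edgeSet ⊕ {p : Sym2 (wallVerts k) // p ∈ (wallSimple k).edgeSet ∧ isDoubledEdge k p}) where
  ends
    | .inl e => e.1
    | .inr e => e.1
  loopless := by
    rintro (e | e)
    · exact (wallSimple k).not_isDiag_of_mem_edgeSet e.2
    · exact (wallSimple k).not_isDiag_of_mem_edgeSet e.2.1

end Walls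

namespace Multigraph

variable {V E : Type}

/-- Tree-partition width of a multigraph (bags may be empty; w.l.o.g. bags are
indexed by the vertices themselves). -/
noncomputable def tpw (G : Multigraph V E) [Fintype V] [Fintype E] : ℕ :=
  sInf {w | ∃ T : SimpleGraph V, T.IsTree ∧ ∃ bag : V → V,
    (Fintype.card V = 1 ∨
      ∀ (e : E) (a b : V), G.ends e = s(a, b) → bag a = bag b ∨ T.Adj (bag a) (bag b)) ∧
    (∀ t : V, (Finset.univ.filter (fun v => bag v = t)).card ≤ w) ∧
    (∀ t t' : V, T.Adj t t' →
      (Finset.univ.filter (fun e : E =>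
        ∃ a b, G.ends e = s(a, b) ∧ bag a = t ∧ bag b = t')).card ≤ w)}

section ThreeCenter

variable {W : Type} [Fintype W]

/-- Degree of `v` in the state `(A, m)`: `A` is the set of remaining vertices and
`m` gives edge multiplicities. -/
noncomputable def stDeg (A : Finset W) (m : Sym2 W → ℕ) (v : W) : ℕ :=
  ∑ w ∈ A.erase v, m s(v, w)

/-- One reduction step of the 3-center construction relative to the marked set `X`:
delete a vertex of degree one, or suppress (dissolve) a vertex of degree two not in `X`. -/
inductive CStep (X : Set W) :
    Finset W × (Sym2 W → ℕ) → Finset W × (Sym2 W → ℕ) → Prop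
  | delete (A : Finset W) (m : Sym2 W → ℕ) (v : W) (hv : v ∈ A) (hd : stDeg A m v = 1) :
      CStep X (A, m) (A.erase v, fun p => if v ∈ p then 0 else m p)
  | suppress (A : Finset W) (m : Sym2 W → ℕ) (v a b : W) (hv : v ∈ A) (hx : v ∉ X)
      (ha : a ∈ A) (hb : b ∈ A) (hav : a ≠ v) (hbv : b ≠ v) (hd : stDeg A m v = 2)
      (h1 : 1 ≤ m s(v, a)) (h2 : a = b → m s(v, a) = 2) (h3 : a ≠ b → 1 ≤ m s(v, b)) :
      CStep X (A, m) (A.erase v,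
        fun p => if v ∈ p then 0 else if a ≠ b ∧ p = s(a, b) then m p + 1 else m p)

/-- The number of vertices of the 3-center of the marked multigraph given by the
state `(A, m)` with marked set `X`: the size of a reduct on which no step applies. -/
noncomputable def centerSize (X : Set W) (A : Finset W) (m : Sym2 W → ℕ) : ℕ :=
  sInf {c | ∃ s : Finset W × (Sym2 W → ℕ),
    Relation.ReflTransGen (CStep X) (A, m) s ∧ (∀ s', ¬ CStep X s s') ∧ s.1.card = c}

end ThreeCenter

section TCW

variable {n : ℕ}

/-- The consolidation map for the torso at node `t` of a tree-cut decomposition: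
a vertex whose bag is `t` is kept, and any other vertex is sent to the peripheral
vertex indexed by the neighbour `u` of `t` whose branch contains its bag. -/
noncomputable def consMap (T : SimpleGraph (Fin n)) (bag : V → Fin n) (t : Fin n) (a : V) :
    V ⊕ Fin n :=
  if bag a = t then Sum.inl a
  else if h : ∃ u, T.Adj t u ∧ (T.deleteEdges {s(t, u)}).Reachable (bag a) u
    then Sum.inr h.choose else Sum.inl a

/-- The vertex set of the torso at `t`: the bag of `t` together with one peripheral
vertex for each neighbour of `t` in the decomposition tree. -/
noncomputable def torsoA [Fintype V] (T : SimpleGraph (Fin n)) (bag : V → Fin n) (t : Fin n) :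
    Finset (V ⊕ Fin n) :=
  (Finset.univ.filter (fun a : V => bag a = t)).image Sum.inl ∪
    (Finset.univ.filter (fun u : Fin n => T.Adj t u)).image Sum.inr

/-- The edge multiplicities of the torso at `t`. -/
noncomputable def torsoM (G : Multigraph V E) [Fintype E] (T : SimpleGraph (Fin n))
    (bag : V → Fin n) (t : Fin n) : Sym2 (V ⊕ Fin n) → ℕ :=
  fun p => if p.IsDiag then 0
    else (Finset.univ.filter (fun e : E => (G.ends e).map (consMap T bag t) = p)).card

/-- The adhesion of the tree edge `{t, t'}`: the number of edges of `G` whose endpoints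
lie in bags on different sides of the edge. -/
noncomputable def adhE (G : Multigraph V E) [Fintype E] (T : SimpleGraph (Fin n))
    (bag : V → Fin n) (t t' : Fin n) : ℕ :=
  (Finset.univ.filter (fun e : E => ∃ a b, G.ends e = s(a, b) ∧
    (T.deleteEdges {s(t, t')}).Reachable (bag a) t ∧
    (T.deleteEdges {s(t, t')}).Reachable (bag b) t')).card

/-- Tree-cut width of a multigraph: the minimum, over tree-cut decompositions, of
the maximum of all adhesions and of the numbers of vertices of the 3-centers
of the torsos. -/
noncomputable def tcw (G : Multigraph V E) [Fintype V] [Fintype E] : ℕ :=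
  sInf {w | ∃ (n : ℕ) (T : SimpleGraph (Fin n)), T.IsTree ∧ ∃ bag : V → Fin n,
    (∀ t t', T.Adj t t' → adhE G T bag t t' ≤ w) ∧
    (∀ t, centerSize (Sum.inl '' {a | bag a = t}) (torsoA T bag t) (torsoM G T bag t) ≤ w)}

end TCW

end Multigraph

/-!
A gadget of `G*` has only two vertices and is attached to the rest of `G*` by only two
edges. If an `H⁺`-immersion model in `G*` placed a branch vertex `u` of `H` inside a gadget,
then three edges of `H⁺` at `u`, at its gadget or at a neighbour would have exactly one end
mapped into that gadget, and their edge-disjoint certifying paths would all have to cross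
this two-edge cut. So the branch vertices of `H` are original vertices of `G`. A path of `G*`
between original vertices never enters a gadget, since it would have to leave it again through
the vertex it came from; hence the certifying paths of the edges of `H` lie in `G`, and every
`H⁺`-packing of `G*` restricts to an `H`-packing of `G`.
-/

lemma Sym2.exists_of_map_inl_eq {α β : Type} {z : Sym2 α} {x y : α ⊕ β}
    (h : z.map Sum.inl = s(x, y)) : ∃ a b, x = .inl a ∧ y = .inl b ∧ z = s(a, b) := by
  induction z using Sym2.ind with
  | _ a b =>
    rw [Sym2.map_mk, Sym2.eq_iff] at h
    rcases h with ⟨rfl, rfl⟩ | ⟨rfl, rfl⟩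
    · exact ⟨a, b, rfl, rfl, rfl⟩
    · exact ⟨b, a, rfl, rfl, Sym2.eq_swap⟩

lemma Bool.eq_or_eq_or_eq (a b c : Bool) : a = b ∨ a = c ∨ b = c := by
  cases a <;> cases b <;> cases c <;> simp

namespace Multigraph

variable {V E V1 E1 : Type}

lemma ne_of_ends_eq {G : Multigraph V E} {e : E} {a b : V} (h : G.ends e = s(a, b)) : a ≠ b :=
  fun hab => G.loopless e (by rw [h, hab]; exact Sym2.mk_isDiag_iff.2 rfl)

lemma Connected.exists_ends_eq {H : Multigraph V1 E1} (hc : H.Connected) (e₀ : E1) (u : V1) :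
    ∃ e w, w ≠ u ∧ H.ends e = s(u, w) := by
  induction h₀ : H.ends e₀ using Sym2.ind with
  | _ a b =>
    obtain ⟨p⟩ := hc.2 u a
    cases p with
    | nil => exact ⟨e₀, b, (ne_of_ends_eq h₀).symm, h₀⟩
    | cons e he _ => exact ⟨e, _, (ne_of_ends_eq he).symm, he⟩

namespace Walk

variable {G : Multigraph V E}

lemma start_mem_support {u v : V} (w : G.Walk u v) : u ∈ w.support := by
  cases w <;> simp [support]

lemma mem_support_of_mem_edges {u v x : V} {w : G.Walk u v} {e : E} (he : e ∈ w.edges)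
    (hx : x ∈ G.ends e) : x ∈ w.support := by
  induction w with
  | nil => simp [edges] at he
  | cons e' he' p ih =>
    simp only [edges, List.mem_cons] at he
    rcases he with rfl | he
    · rw [he', Sym2.mem_iff] at hx
      rcases hx with rfl | rfl
      · simp [support]
      · simp [support, start_mem_support]
    · simp [support, ih he]

lemma edges_ne_nil_of_ne {u v : V} (w : G.Walk u v) (h : u ≠ v) : w.edges ≠ [] := by
  cases w with
  | nil => exact absurd rfl h
  | cons => simp [edges]

lemma exists_mem_edges_of_not_iff (P : V → Prop) {x y : V} (w : G.Walk x y)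
    (h : ¬(P x ↔ P y)) : ∃ e ∈ w.edges, ∃ a b, G.ends e = s(a, b) ∧ P a ∧ ¬P b := by
  induction w with
  | nil => exact absurd Iff.rfl h
  | @cons u v y e he p ih =>
    by_cases huv : P u ↔ P v
    · obtain ⟨f, hf, rest⟩ := ih (by rwa [huv] at h)
      exact ⟨f, by simp [edges, hf], rest⟩
    · refine ⟨e, by simp [edges], ?_⟩
      by_cases hu : P u
      · exact ⟨u, v, he, hu, fun hv => huv (iff_of_true hu hv)⟩
      · exact ⟨v, u, he.trans Sym2.eq_swap, by tauto, hu⟩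

end Walk

def gadget {α β : Type} (q : β) : Set (α ⊕ β × Bool) := Set.range fun c => .inr (q, c)

section Star

variable (G : Multigraph V E) [Fintype E]

@[simp] lemma star_ends_inr_inl (q : Σ v, Fin (G.mdeg v)) (i : Fin 2) :
    G.star.ends (.inr (.inl (q, i))) = s(.inr (q, false), .inr (q, true)) := rfl

@[simp] lemma star_ends_inr_inr (q : Σ v, Fin (G.mdeg v)) (c : Bool) :
    G.star.ends (.inr (.inr (q, c))) = s(.inl q.1, .inr (q, c)) := rfl

lemma star_ends_eq_of_mem_gadget {q : Σ v, Fin (G.mdeg v)} {f} {a b}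
    (hf : G.star.ends f = s(a, b)) (ha : a ∈ gadget q) (hb : b ∉ gadget q) :
    ∃ c, f = .inr (.inr (q, c)) ∧ b = .inl q.1 := by
  obtain ⟨c, rfl⟩ := ha
  rcases f with e | ⟨r, i⟩ | ⟨r, d⟩
  · obtain ⟨_, _, h, -⟩ := Sym2.exists_of_map_inl_eq hf
    cases h
  · simp only [star_ends_inr_inl, Sym2.eq_iff] at hf
    rcases hf with ⟨⟨rfl, -⟩, rfl⟩ | ⟨rfl, ⟨rfl, -⟩⟩ <;> exact absurd ⟨_, rfl⟩ hb
  · simp only [star_ends_inr_inr, Sym2.eq_iff] at hf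
    rcases hf with ⟨h, -⟩ | ⟨rfl, h⟩
    · cases h
    · obtain ⟨rfl, rfl⟩ := Prod.mk.inj (Sum.inr.inj h)
      exact ⟨d, rfl, rfl⟩

lemma star_exists_cut_edge (q : Σ v, Fin (G.mdeg v)) {x y} (w : G.star.Walk x y)
    (h : ¬(x ∈ gadget q ↔ y ∈ gadget q)) :
    ∃ c, .inr (.inr (q, c)) ∈ w.edges ∧ .inl q.1 ∈ w.support := by
  obtain ⟨f, hf, a, b, hab, ha, hb⟩ := w.exists_mem_edges_of_not_iff (· ∈ gadget q) h
  obtain ⟨c, rfl, rfl⟩ := star_ends_eq_of_mem_gadget G hab ha hb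
  exact ⟨c, hf, Walk.mem_support_of_mem_edges hf (hab ▸ Sym2.mem_mk_right _ _)⟩

lemma exists_walk_of_star_isPath {x y} (w : G.star.Walk x y) (hw : w.IsPath) {a b : V}
    (ha : x = .inl a) (hb : y = .inl b) :
    ∃ g : G.Walk a b, g.support.map .inl = w.support ∧ g.edges.map .inl = w.edges := by
  induction w generalizing a with
  | nil =>
    obtain rfl := Sum.inl.inj (ha.symm.trans hb)
    exact ⟨.nil a, by simp [Walk.support, ha], rfl⟩
  | @cons u v y e he p ih =>
    subst ha
    have hw' : Sum.inl a ∉ p.support ∧ p.IsPath := List.nodup_cons.1 hw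
    rcases e with e | ⟨r, i⟩ | ⟨r, c⟩
    · obtain ⟨_, v', ⟨⟩, rfl, hG⟩ := Sym2.exists_of_map_inl_eq he
      obtain ⟨g, hs, hE⟩ := ih hw'.2 rfl hb
      exact ⟨.cons e hG g, by simp [Walk.support, hs], by simp [Walk.edges, hE]⟩
    · simp at he
    · -- entering the gadget at `r`, the path could only leave it again through `a`
      rw [star_ends_inr_inr, Sym2.eq_iff] at he
      rcases he with ⟨⟨⟩, rfl⟩ | ⟨-, ⟨⟩⟩
      obtain ⟨-, -, hr⟩ := star_exists_cut_edge G r p (by simp [gadget, hb])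
      exact absurd hr hw'.1

end Star

namespace ImmersionModel

section

variable {W F : Type} {K : Multigraph W F} {G : Multigraph V E} [Fintype E]
  (m : ImmersionModel K G.star) (q : Σ v, Fin (G.mdeg v))

lemma vmap_notMem_gadget {z₁ z₂ z₃ : W} (h₁₂ : z₁ ≠ z₂) (h₃₁ : z₃ ≠ z₁) (h₃₂ : z₃ ≠ z₂)
    (h₁ : m.vmap z₁ ∈ gadget q) (h₂ : m.vmap z₂ ∈ gadget q) : m.vmap z₃ ∉ gadget q := by
  rintro ⟨c₃, h₃⟩
  obtain ⟨c₁, h₁⟩ := h₁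
  obtain ⟨c₂, h₂⟩ := h₂
  rcases Bool.eq_or_eq_or_eq c₁ c₂ c₃ with rfl | rfl | rfl
  · exact h₁₂ (m.vmap_inj (h₁.symm.trans h₂))
  · exact h₃₁ (m.vmap_inj (h₃.symm.trans h₁))
  · exact h₃₂ (m.vmap_inj (h₃.symm.trans h₂))

lemma exists_cut_edge_mem_path {f : F} {z₁ z₂ : W} (hf : K.ends f = s(z₁, z₂))
    (h : ¬(m.vmap z₁ ∈ gadget q ↔ m.vmap z₂ ∈ gadget q)) :
    ∃ c, .inr (.inr (q, c)) ∈ (m.path f).edges := by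
  have hst := (m.ends_eq f).symm.trans hf
  rw [Sym2.eq_iff] at hst
  obtain ⟨c, hc, -⟩ := star_exists_cut_edge G q (m.path f)
    (by rcases hst with ⟨h₁, h₂⟩ | ⟨h₁, h₂⟩ <;> rw [h₁, h₂] <;> tauto)
  exact ⟨c, hc⟩

lemma not_three_cut_edges_mem_path {f₁ f₂ f₃ : F} (h₁₂ : f₁ ≠ f₂) (h₁₃ : f₁ ≠ f₃) (h₂₃ : f₂ ≠ f₃)
    (h₁ : ∃ c, .inr (.inr (q, c)) ∈ (m.path f₁).edges)
    (h₂ : ∃ c, .inr (.inr (q, c)) ∈ (m.path f₂).edges)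
    (h₃ : ∃ c, .inr (.inr (q, c)) ∈ (m.path f₃).edges) : False := by
  obtain ⟨c₁, h₁⟩ := h₁
  obtain ⟨c₂, h₂⟩ := h₂
  obtain ⟨c₃, h₃⟩ := h₃
  rcases Bool.eq_or_eq_or_eq c₁ c₂ c₃ with rfl | rfl | rfl
  · exact m.edge_disjoint f₁ f₂ h₁₂ _ h₁ h₂
  · exact m.edge_disjoint f₁ f₃ h₁₃ _ h₁ h₃
  · exact m.edge_disjoint f₂ f₃ h₂₃ _ h₂ h₃

end

variable {H : Multigraph V1 E1} {G : Multigraph V E} [Fintype E]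

lemma vmap_inl_notMem_gadget (hc : H.Connected) (e₀ : E1) (m : ImmersionModel H.plus G.star)
    (u : V1) (q : Σ v, Fin (G.mdeg v)) : m.vmap (.inl u) ∉ gadget q := by
  intro hu
  obtain ⟨e, w, hwu, hew⟩ := hc.exists_ends_eq e₀ u
  have hew' : H.plus.ends (.inl e) = s(.inl u, .inl w) := congrArg (Sym2.map Sum.inl) hew
  have hwu' : (.inl w : V1 ⊕ V1 × Bool) ≠ .inl u := fun h => hwu (Sum.inl.inj h)
  have cross {f z₁ z₂} (hf : H.plus.ends f = s(z₁, z₂))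
      (h : ¬(m.vmap z₁ ∈ gadget q ↔ m.vmap z₂ ∈ gadget q)) :=
    m.exists_cut_edge_mem_path q hf h
  by_cases hw : m.vmap (.inl w) ∈ gadget q
  · have hu₀ := m.vmap_notMem_gadget q hwu' (z₃ := .inr (u, false)) (by simp) (by simp) hw hu
    have hu₁ := m.vmap_notMem_gadget q hwu' (z₃ := .inr (u, true)) (by simp) (by simp) hw hu
    have hw₀ := m.vmap_notMem_gadget q hwu' (z₃ := .inr (w, false)) (by simp) (by simp) hw hu
    exact m.not_three_cut_edges_mem_path q (f₁ := .inr (.inr (u, false)))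
      (f₂ := .inr (.inr (u, true))) (f₃ := .inr (.inr (w, false))) (by simp)
      (by simp [hwu.symm]) (by simp [hwu.symm])
      (cross rfl (by tauto)) (cross rfl (by tauto)) (cross rfl (by tauto))
  by_cases hu₀ : m.vmap (.inr (u, false)) ∈ gadget q
  · have hu₁ := m.vmap_notMem_gadget q (z₁ := .inl u) (z₃ := .inr (u, true)) (by simp)
      (by simp) (by simp) hu hu₀
    exact m.not_three_cut_edges_mem_path q (f₁ := .inl e) (f₂ := .inr (.inr (u, true)))
      (f₃ := .inr (.inl (u, 0))) (by simp) (by simp) (by simp)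
      (cross hew' (by tauto)) (cross rfl (by tauto)) (cross rfl (by tauto))
  by_cases hu₁ : m.vmap (.inr (u, true)) ∈ gadget q
  · exact m.not_three_cut_edges_mem_path q (f₁ := .inl e) (f₂ := .inr (.inr (u, false)))
      (f₃ := .inr (.inl (u, 0))) (by simp) (by simp) (by simp)
      (cross hew' (by tauto)) (cross rfl (by tauto)) (cross rfl (by tauto))
  · exact m.not_three_cut_edges_mem_path q (f₁ := .inl e) (f₂ := .inr (.inr (u, false)))
      (f₃ := .inr (.inr (u, true))) (by simp) (by simp) (by simp)
      (cross hew' (by tauto)) (cross rfl (by tauto)) (cross rfl (by tauto))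

lemma exists_vmap_inl_eq_inl (hc : H.Connected) (e₀ : E1) (m : ImmersionModel H.plus G.star)
    (u : V1) : ∃ v, m.vmap (.inl u) = .inl v := by
  rcases h : m.vmap (.inl u) with v | ⟨q, c⟩
  · exact ⟨v, rfl⟩
  · exact absurd ⟨c, h.symm⟩ (m.vmap_inl_notMem_gadget hc e₀ u q)

theorem exists_mapsTo_of_plus_star (hc : H.Connected) (e₀ : E1)
    (m : ImmersionModel H.plus G.star) :
    ∃ m' : ImmersionModel H G, Set.MapsTo Sum.inl m'.edgeSet m.edgeSet := by
  choose vmap' hvmap using m.exists_vmap_inl_eq_inl hc e₀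
  choose src' tgt' hsrc htgt hends using fun e =>
    Sym2.exists_of_map_inl_eq (m.ends_eq (.inl e))
  choose path' hsupport hedges using fun e =>
    exists_walk_of_star_isPath G (m.path (.inl e)) (m.path_isPath (.inl e))
      (by rw [hsrc, hvmap]) (by rw [htgt, hvmap])
  have mem_path {e x} (hx : x ∈ (path' e).edges) : .inl x ∈ (m.path (.inl e)).edges :=
    hedges e ▸ List.mem_map_of_mem hx
  refine ⟨⟨vmap', fun a b hab => ?_, src', tgt', hends, path', fun e => ?_, ?_⟩, ?_⟩
  · exact Sum.inl.inj (m.vmap_inj (by rw [hvmap, hvmap, hab]))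
  · have hpath : (m.path (.inl e)).support.Nodup := m.path_isPath (.inl e)
    exact List.Nodup.of_map Sum.inl (hsupport e ▸ hpath)
  · exact fun e₁ e₂ hne x h₁ h₂ =>
      m.edge_disjoint _ _ (fun h => hne (Sum.inl.inj h)) _ (mem_path h₁) (mem_path h₂)
  · exact fun x ⟨e, hx⟩ => ⟨.inl e, mem_path hx⟩

end ImmersionModel

variable {V' E' V1' E1' : Type} {H : Multigraph V1 E1} {G : Multigraph V E}

lemma ImmersionModel.edgeSet_nonempty (m : ImmersionModel H G) (e : E1) :
    m.edgeSet.Nonempty := by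
  have hne : m.vmap (m.src e) ≠ m.vmap (m.tgt e) := m.vmap_inj.ne (ne_of_ends_eq (m.ends_eq e))
  obtain ⟨x, hx⟩ := List.exists_mem_of_ne_nil _ ((m.path e).edges_ne_nil_of_ne hne)
  exact ⟨x, e, hx⟩

lemma bddAbove_packings [Fintype E] (e₀ : E1) :
    BddAbove {n | ∃ f : Fin n → ImmersionModel H G,
      ∀ i j, i ≠ j → Disjoint (f i).edgeSet (f j).edgeSet} := by
  refine ⟨Fintype.card E, ?_⟩
  rintro n ⟨f, hf⟩
  choose x hx using fun i => (f i).edgeSet_nonempty e₀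
  have hinj : Function.Injective x := fun i j hij => by
    by_contra hne
    exact Set.disjoint_left.1 (hf i j hne) (hx i) (hij ▸ hx j)
  simpa using Fintype.card_le_of_injective x hinj

lemma packNum_le_packNum_of_forall_exists_mapsTo {H' : Multigraph V1' E1'} {G' : Multigraph V' E'}
    (φ : E → E') (hbdd : BddAbove {n | ∃ f : Fin n → ImmersionModel H G,
      ∀ i j, i ≠ j → Disjoint (f i).edgeSet (f j).edgeSet})
    (h : ∀ m : ImmersionModel H' G', ∃ m' : ImmersionModel H G, Set.MapsTo φ m'.edgeSet m.edgeSet) :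
    packNum H' G' ≤ packNum H G := by
  refine csSup_le_csSup hbdd ⟨0, finZeroElim, finZeroElim⟩ ?_
  rintro n ⟨f, hf⟩
  choose g hg using fun i => h (f i)
  exact ⟨g, fun i j hij => Set.disjoint_left.2 fun x hi hj =>
    Set.disjoint_left.1 (hf i j hij) (hg i hi) (hg j hj)⟩

end Multigraph

/-- `pack_{H⁺}(G*) ≤ pack_H(G)` for connected `H` with at least one edge. -/
theorem packNum_plus_star_le {V1 E1 V E : Type} [Fintype E]
    (H : Multigraph V1 E1) (G : Multigraph V E)
    (hc : H.Connected) (he : Nonempty E1) :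
    Multigraph.packNum H.plus G.star ≤ Multigraph.packNum H G := by
  obtain ⟨e₀⟩ := he
  exact Multigraph.packNum_le_packNum_of_forall_exists_mapsTo Sum.inl
    (Multigraph.bddAbove_packings e₀) (Multigraph.ImmersionModel.exists_mapsTo_of_plus_star hc e₀)
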